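/- (Permutation lemma, formal version) Let F̂ ∈ GL_p(C[[z]]) be an invertible formal power series matrix and K = diag(k_1, ..., k_p) a diagonal integer matrix. Then there exist a matrix T(z) with entries polynomial in 1/z whose determinant is a nonzero monomial c z^{-m}, a matrix Ĥ ∈ GL_p(C[[z]]), and a diagonal matrix D obtained from K by permuting its diagonal entries, such that T(z) z^K F̂(z) = Ĥ(z) z^D. -/

import Mathlib

/-!
Write `F₀ = F̂(0)`. Expanding `det F₀` along a row of minimal weight `kᵢ` and recursing on an
invertible minor produces a permutation `σ` such that, for every threshold `c`, the rows of `F₀`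
of weight `≥ c` restricted to the columns `j` with `k (σ j) ≥ c` form an invertible block. This
lets one build, degree by degree, polynomial rows `Sᵢ` supported in degrees `≤ kⱼ - k (σ i)`, equal
to the unit vector `e_{σ i}` on the columns of weight `k (σ i)`, and such that `(S F̂)ᵢⱼ` vanishes
to order `k (σ j) - k (σ i)`. Then `T = z^{σK} S z^{-K}` is polynomial in `1/z`, `S` is
unitriangular up to `σ` (so `det T = sign σ`), and `Ĥ = z^{σK} S F̂ z^{-σK}` is a power series
matrix with `det Ĥ = sign σ · det F̂`.
-/

open Matrix
open scoped Polynomial PowerSeries LaurentSeries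

variable {K : Type*} [Field K] {ι : Type*} [Fintype ι]

def Matrix.IsWeightPivot {R α : Type*} [Semiring R] [LinearOrder α] (A : Matrix ι ι R)
    (k : ι → α) (σ : Equiv.Perm ι) : Prop :=
  ∀ (c : α) (φ : ι → R), ∃ x : ι → R,
    (∀ i, x i ≠ 0 → c ≤ k i) ∧ ∀ j, c ≤ k (σ j) → (x ᵥ* A) j = φ j

theorem Matrix.exists_isWeightPivot {α : Type*} [LinearOrder α] :
    ∀ {n : ℕ} (A : Matrix (Fin n) (Fin n) K), A.det ≠ 0 → ∀ k : Fin n → α,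
      ∃ σ, A.IsWeightPivot k σ
  | 0, _, _, _ => ⟨1, fun _ _ => ⟨0, by simp, fun j => j.elim0⟩⟩
  | n + 1, A, hA, k => by
    obtain ⟨i₀, hi₀⟩ := Finite.exists_min k
    obtain ⟨j₀, -, hj₀⟩ := Finset.exists_ne_zero_of_sum_ne_zero (det_succ_row A i₀ ▸ hA)
    obtain ⟨τ, hτ⟩ := exists_isWeightPivot _ (right_ne_zero_of_mul hj₀) (k ∘ i₀.succAbove)
    let σ := (finSuccEquiv' j₀).trans ((Equiv.optionCongr τ).trans (finSuccEquiv' i₀).symm)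
    have hσ₀ : σ j₀ = i₀ := by simp [σ]
    have hσ : ∀ b, σ (j₀.succAbove b) = i₀.succAbove (τ b) := by simp [σ]
    refine ⟨σ, fun c φ => ?_⟩
    by_cases hc : c ≤ k i₀
    · obtain ⟨x, hx⟩ := vecMul_surjective_iff_isUnit.2
        ((isUnit_iff_isUnit_det A).2 (Ne.isUnit hA)) φ
      exact ⟨x, fun i _ => hc.trans (hi₀ i), fun j _ => congrFun hx j⟩
    obtain ⟨x, hx_supp, hx⟩ := hτ c (φ ∘ j₀.succAbove)
    refine ⟨Fin.insertNth i₀ 0 x, fun i hi => ?_, fun j hj => ?_⟩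
    · obtain rfl | ⟨a, rfl⟩ := (eq_or_ne i i₀).imp_right Fin.exists_succAbove_eq
      · simp at hi
      · simpa using hx_supp a (by simpa using hi)
    · obtain rfl | ⟨b, rfl⟩ := (eq_or_ne j j₀).imp_right Fin.exists_succAbove_eq
      · exact absurd (hσ₀ ▸ hj) hc
      · have := hx b (by rwa [hσ] at hj)
        simp only [vecMul, dotProduct] at this ⊢
        rw [Fin.sum_univ_succAbove _ i₀]
        simpa using this

theorem Matrix.det_eq_sign_of_weighted_unitriangular [DecidableEq ι] {R α : Type*} [CommRing R]
    [LinearOrder α] (S : Matrix ι ι R) (k : ι → α) (σ : Equiv.Perm ι)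
    (hlt : ∀ i j, k j < k (σ i) → S i j = 0)
    (heq : ∀ i j, k j = k (σ i) → S i j = if j = σ i then 1 else 0) :
    S.det = Equiv.Perm.sign σ := by
  have hS : (S.submatrix id σ).BlockTriangular (k ∘ σ) := fun i j hij => hlt i (σ j) hij
  have hdet : (S.submatrix id σ).det = 1 := by
    rw [hS.det]
    refine Finset.prod_eq_one fun a _ => ?_
    have hblock : (S.submatrix id σ).toSquareBlock (k ∘ σ) a = 1 := by
      ext ⟨i, hi⟩ ⟨j, hj⟩
      simp [toSquareBlock_def, heq i (σ j) (hj.trans hi.symm), one_apply, eq_comm]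
    rw [hblock, det_one]
  calc S.det = Equiv.Perm.sign σ * (Equiv.Perm.sign σ * S.det) := by
        rw [← mul_assoc, ← Int.cast_mul, ← Units.val_mul, Int.units_mul_self]; simp
    _ = Equiv.Perm.sign σ := by rw [← det_permute', hdet, mul_one]

theorem PowerSeries.coeff_monomial_vecMul (F : Matrix ι ι K⟦X⟧) (x : ι → K) (D n : ℕ) (j : ι) :
    coeff n (((fun l => monomial D (x l)) ᵥ* F) j) =
      if D ≤ n then (x ᵥ* F.map (coeff (n - D))) j else 0 := by
  simp only [vecMul, dotProduct, monomial_eq_C_mul_X_pow, mul_comm (C _), mul_assoc,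
    ← Finset.mul_sum, coeff_X_pow_mul']
  split_ifs <;> simp [mul_comm]

theorem Matrix.IsWeightPivot.exists_row_of_lt [DecidableEq ι] {F : Matrix ι ι K⟦X⟧}
    {k : ι → ℤ} {σ : Equiv.Perm ι} (hσ : (F.map PowerSeries.constantCoeff).IsWeightPivot k σ)
    (i₀ : ι) (D : ℕ) :
    ∃ s : ι → K[X], (∀ j n, (s j).coeff n ≠ 0 → n + k i₀ ≤ k j) ∧
      (∀ j, k j = k i₀ → s j = if j = i₀ then 1 else 0) ∧
      ∀ j (n : ℕ), n < D → n + k i₀ < k (σ j) →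
        PowerSeries.coeff n (((fun l => (s l : K⟦X⟧)) ᵥ* F) j) = 0 := by
  induction D with
  | zero =>
    refine ⟨fun j => if j = i₀ then 1 else 0, fun j n hn => ?_, fun _ _ => rfl,
      fun _ _ hn => absurd hn (Nat.not_lt_zero _)⟩
    obtain rfl : j = i₀ := by by_contra h; simp [h] at hn
    obtain rfl : n = 0 := by by_contra h; simp [Polynomial.coeff_one, h] at hn
    simp
  | succ D ih =>
    obtain ⟨s, hs_supp, hs_diag, hs⟩ := ih
    -- A correction in degree `D` alone, on columns of weight `> D + k i₀`, kills the
    -- coefficient of degree `D` and leaves the lower ones untouched.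
    obtain ⟨x, hx_supp, hx⟩ :=
      hσ (D + k i₀ + 1) fun j => -PowerSeries.coeff D (((fun l => (s l : K⟦X⟧)) ᵥ* F) j)
    refine ⟨fun j => s j + Polynomial.monomial D (x j), fun j n hn => ?_, fun j hj => ?_,
      fun j n hn hnj => ?_⟩
    · rw [Polynomial.coeff_add, Polynomial.coeff_monomial] at hn
      by_cases h : (s j).coeff n = 0
      · rw [h, zero_add] at hn
        split_ifs at hn with hD
        · have := hx_supp j hn
          omega
        · exact absurd rfl hn
      · exact hs_supp j n h
    · have hxj : x j = 0 := by
        by_contra h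
        have := hx_supp j h
        omega
      simp [hxj, hs_diag j hj]
    · have hsplit : (fun l => ((s l + Polynomial.monomial D (x l) : K[X]) : K⟦X⟧)) =
          (fun l => (s l : K⟦X⟧)) + fun l => PowerSeries.monomial D (x l) := by
        ext1 l
        simp
      rw [hsplit, add_vecMul, Pi.add_apply, map_add, PowerSeries.coeff_monomial_vecMul]
      obtain hn | rfl := Nat.lt_succ_iff_lt_or_eq.1 hn
      · rw [hs j n hn hnj, if_neg (by omega), add_zero]
      · rw [if_pos le_rfl, Nat.sub_self, PowerSeries.coeff_zero_eq_constantCoeff,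
          hx j (by omega), add_neg_cancel]

theorem Matrix.IsWeightPivot.exists_polynomial_matrix [DecidableEq ι] {F : Matrix ι ι K⟦X⟧}
    {k : ι → ℤ} {σ : Equiv.Perm ι} (hσ : (F.map PowerSeries.constantCoeff).IsWeightPivot k σ) :
    ∃ S : Matrix ι ι K[X], (∀ i j (n : ℕ), (S i j).coeff n ≠ 0 → n + k (σ i) ≤ k j) ∧
      S.det = Equiv.Perm.sign σ ∧
      ∀ i j (n : ℕ), n + k (σ i) < k (σ j) →
        PowerSeries.coeff n ((S.map Polynomial.coeToPowerSeries.ringHom * F) i j) = 0 := by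
  have hrow : ∀ i, ∃ s : ι → K[X], (∀ j n, (s j).coeff n ≠ 0 → n + k (σ i) ≤ k j) ∧
      (∀ j, k j = k (σ i) → s j = if j = σ i then 1 else 0) ∧
      ∀ j (n : ℕ), n + k (σ i) < k (σ j) →
        PowerSeries.coeff n (((fun l => (s l : K⟦X⟧)) ᵥ* F) j) = 0 := fun i => by
    obtain ⟨s, hs_supp, hs_diag, hs⟩ :=
      hσ.exists_row_of_lt (σ i) (Finset.univ.sup fun j => (k (σ j) - k (σ i)).toNat)
    refine ⟨s, hs_supp, hs_diag, fun j n hn => hs j n ?_ hn⟩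
    have := Finset.le_sup (f := fun j => (k (σ j) - k (σ i)).toNat) (Finset.mem_univ j)
    omega
  choose s hs_supp hs_diag hs using hrow
  refine ⟨of s, hs_supp,
    det_eq_sign_of_weighted_unitriangular _ k σ (fun i j hij => ?_) hs_diag, hs⟩
  ext n
  by_contra hn
  have := hs_supp i j n hn
  omega

theorem HahnSeries.ofPowerSeries_coe_polynomial (q : K[X]) :
    ofPowerSeries ℤ K q = q.eval₂ (algebraMap K K⸨X⸩) (single 1 1) := by
  have : (ofPowerSeries ℤ K).comp Polynomial.coeToPowerSeries.ringHom =
      Polynomial.eval₂RingHom (algebraMap K K⸨X⸩) (single 1 1) :=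
    Polynomial.ringHom_ext
      (fun a => by rw [RingHom.comp_apply, Polynomial.coeToPowerSeries.ringHom_apply,
        Polynomial.coe_C, Polynomial.coe_eval₂RingHom, Polynomial.eval₂_C]; rfl) (by simp)
  exact RingHom.congr_fun this q

theorem HahnSeries.exists_eval₂_eq_single_mul (e : ℤ) (q : K[X])
    (hq : ∀ n : ℕ, q.coeff n ≠ 0 → n + e ≤ 0) :
    ∃ r : K[X], single e 1 * ofPowerSeries ℤ K q =
      r.eval₂ (algebraMap K K⸨X⸩) (single (-1) 1) := by
  obtain rfl | hq0 := eq_or_ne q 0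
  · exact ⟨0, by simp⟩
  have hdeg := hq _ (Polynomial.leadingCoeff_ne_zero.2 hq0)
  let _ : Invertible (single (1 : ℤ) (1 : K)) :=
    ⟨single (-1) 1, by simp [single_mul_single], by simp [single_mul_single]⟩
  refine ⟨q.reflect (-e).toNat, ?_⟩
  have := Polynomial.eval₂_reflect_mul_pow (algebraMap K K⸨X⸩) (single 1 1) (-e).toNat q
    (by omega)
  rw [ofPowerSeries_coe_polynomial, ← this, single_pow, one_pow, nsmul_one,
    Int.toNat_of_nonneg (by omega), mul_left_comm, single_mul_single, add_neg_cancel, mul_one,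
    single_zero_one, mul_one]
  rfl

theorem HahnSeries.exists_ofPowerSeries_eq_single_mul (e : ℤ) (g : K⟦X⟧)
    (hg : ∀ n : ℕ, n + e < 0 → PowerSeries.coeff n g = 0) :
    ∃ h : K⟦X⟧, ofPowerSeries ℤ K h = single e 1 * ofPowerSeries ℤ K g := by
  obtain he | he := le_or_gt 0 e
  · refine ⟨PowerSeries.X ^ e.toNat * g, ?_⟩
    rw [map_mul, ofPowerSeries_X_pow, Int.toNat_of_nonneg he]
  · obtain ⟨h, rfl⟩ :=
      (PowerSeries.X_pow_dvd_iff (n := (-e).toNat)).2 fun n hn => hg n (by omega)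
    refine ⟨h, ?_⟩
    rw [map_mul, ofPowerSeries_X_pow, ← mul_assoc, single_mul_single,
      show e + ((-e).toNat : ℤ) = 0 by omega, one_mul, single_zero_one, one_mul]

namespace LaurentSeries

variable [DecidableEq ι]

noncomputable def zpowDiagonal (a : ι → ℤ) : Matrix ι ι K⸨X⸩ :=
  diagonal fun i => HahnSeries.single (a i) 1

theorem zpowDiagonal_mul_neg (a : ι → ℤ) :
    (zpowDiagonal a * zpowDiagonal (-a) : Matrix ι ι K⸨X⸩) = 1 := by
  simp [zpowDiagonal, HahnSeries.single_mul_single]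

theorem zpowDiagonal_neg_mul (a : ι → ℤ) :
    (zpowDiagonal (-a) * zpowDiagonal a : Matrix ι ι K⸨X⸩) = 1 := by
  simpa using zpowDiagonal_mul_neg (K := K) (-a)

theorem zpowDiagonal_mul_mul_apply (a b : ι → ℤ) (M : Matrix ι ι K⸨X⸩) (i j : ι) :
    (zpowDiagonal a * M * zpowDiagonal b : Matrix ι ι K⸨X⸩) i j =
      HahnSeries.single (a i + b j) 1 * M i j := by
  simp [zpowDiagonal, mul_diagonal, diagonal_mul, mul_right_comm _ (M i j),
    HahnSeries.single_mul_single]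

theorem det_zpowDiagonal_mul_mul_neg (a : ι → ℤ) (M : Matrix ι ι K⸨X⸩) :
    (zpowDiagonal a * M * zpowDiagonal (-a)).det = M.det := by
  rw [det_mul, det_mul, mul_right_comm, ← det_mul, zpowDiagonal_mul_neg, det_one, one_mul]

theorem det_zpowDiagonal_comp_mul_mul_neg (a : ι → ℤ) (σ : Equiv.Perm ι)
    (M : Matrix ι ι K⸨X⸩) : (zpowDiagonal (a ∘ σ) * M * zpowDiagonal (-a)).det = M.det := by
  have hcomp : (zpowDiagonal (a ∘ σ) : Matrix ι ι K⸨X⸩).det = (zpowDiagonal a).det := by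
    simp only [zpowDiagonal, det_diagonal, Function.comp_apply]
    exact Equiv.prod_comp σ fun i => (HahnSeries.single (a i) 1 : K⸨X⸩)
  rw [det_mul, det_mul, hcomp, ← det_mul, ← det_mul, det_zpowDiagonal_mul_mul_neg]

theorem exists_eval₂_eq_zpowDiagonal_mul_mul_apply (S : Matrix ι ι K[X]) (a b : ι → ℤ)
    (hS : ∀ i j (n : ℕ), (S i j).coeff n ≠ 0 → n + a i ≤ b j) (i j : ι) :
    ∃ r : K[X], (zpowDiagonal a * (S.map Polynomial.coeToPowerSeries.ringHom).map
        (HahnSeries.ofPowerSeries ℤ K) * zpowDiagonal (-b) : Matrix ι ι K⸨X⸩) i j =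
      r.eval₂ (algebraMap K K⸨X⸩) (HahnSeries.single (-1) 1) := by
  rw [zpowDiagonal_mul_mul_apply]
  exact HahnSeries.exists_eval₂_eq_single_mul _ _ fun n hn => by
    have := hS i j n hn
    rw [Pi.neg_apply]
    omega

theorem exists_map_ofPowerSeries_eq (G : Matrix ι ι K⟦X⟧) (a : ι → ℤ)
    (hG : ∀ i j (n : ℕ), n + a i < a j → PowerSeries.coeff n (G i j) = 0) :
    ∃ H : Matrix ι ι K⟦X⟧, H.map (HahnSeries.ofPowerSeries ℤ K) =
      zpowDiagonal a * G.map (HahnSeries.ofPowerSeries ℤ K) * zpowDiagonal (-a) := by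
  choose H hH using fun i j =>
    HahnSeries.exists_ofPowerSeries_eq_single_mul (a i + -a j) (G i j)
      fun n hn => hG i j n (by omega)
  exact ⟨of H, by ext i j; rw [zpowDiagonal_mul_mul_apply, map_apply, of_apply, hH]; rfl⟩

theorem det_eq_of_map_ofPowerSeries_eq {H G : Matrix ι ι K⟦X⟧} {a : ι → ℤ}
    (h : H.map (HahnSeries.ofPowerSeries ℤ K) =
      zpowDiagonal a * G.map (HahnSeries.ofPowerSeries ℤ K) * zpowDiagonal (-a)) :
    H.det = G.det := by
  apply HahnSeries.ofPowerSeries_injective (Γ := ℤ)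
  rw [RingHom.map_det, RingHom.mapMatrix_apply, h, det_zpowDiagonal_mul_mul_neg,
    RingHom.map_det]
  rfl

end LaurentSeries

open LaurentSeries in
/-- permutation lemma, formal version.  Let `F̂ ∈ GL_p(ℂ[[z]])` and
`K = diag(k₁,…,k_p)` a diagonal integer matrix.  Then there exist a matrix `T(z)` with entries
polynomial in `1/z` whose determinant is a nonzero monomial `c z^{-m}`, an invertible
`Ĥ ∈ GL_p(ℂ[[z]])`, and a permutation `σ` (giving `D = diag(k_{σ(1)},…,k_{σ(p)})`), such that
`T(z) z^K F̂(z) = Ĥ(z) z^D`. -/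
theorem stmt_9 (p : ℕ) (Fhat : Matrix (Fin p) (Fin p) (PowerSeries ℂ))
    (hFhat : IsUnit Fhat.det) (k : Fin p → ℤ) :
    ∃ (T : Matrix (Fin p) (Fin p) (LaurentSeries ℂ))
      (Hhat : Matrix (Fin p) (Fin p) (PowerSeries ℂ)) (σ : Equiv.Perm (Fin p)),
      (∀ i j, ∃ q : Polynomial ℂ,
        T i j = Polynomial.eval₂ (algebraMap ℂ (LaurentSeries ℂ))
          (HahnSeries.single (-1 : ℤ) 1) q) ∧
      (∃ (cst : ℂ) (m : ℕ), cst ≠ 0 ∧ T.det = HahnSeries.single (-(m : ℤ)) cst) ∧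
      IsUnit Hhat.det ∧
      T * Matrix.diagonal (fun i => (HahnSeries.single (k i) 1 : LaurentSeries ℂ)) *
          (Fhat.map (HahnSeries.ofPowerSeries ℤ ℂ)) =
        (Hhat.map (HahnSeries.ofPowerSeries ℤ ℂ)) *
          Matrix.diagonal (fun i => (HahnSeries.single (k (σ i)) 1 : LaurentSeries ℂ)) := by
  have hF₀ : (Fhat.map PowerSeries.constantCoeff).det ≠ 0 := by
    rw [← RingHom.mapMatrix_apply, ← RingHom.map_det]
    exact (hFhat.map _).ne_zero
  obtain ⟨σ, hσ⟩ := exists_isWeightPivot _ hF₀ k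
  obtain ⟨S, hS_supp, hS_det, hS_low⟩ := hσ.exists_polynomial_matrix
  obtain ⟨Hhat, hH⟩ := exists_map_ofPowerSeries_eq _ (k ∘ σ) hS_low
  refine ⟨zpowDiagonal (k ∘ σ) * (S.map Polynomial.coeToPowerSeries.ringHom).map
      (HahnSeries.ofPowerSeries ℤ ℂ) * zpowDiagonal (-k), Hhat, σ,
    exists_eval₂_eq_zpowDiagonal_mul_mul_apply S _ k hS_supp,
    ⟨Equiv.Perm.sign σ, 0, by simp, ?_⟩, ?_, ?_⟩
  · rw [det_zpowDiagonal_comp_mul_mul_neg, ← RingHom.mapMatrix_apply, ← RingHom.mapMatrix_apply,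
      ← RingHom.map_det, ← RingHom.map_det, hS_det, map_intCast, map_intCast, Nat.cast_zero,
      neg_zero, HahnSeries.single_zero_intCast]
  · rw [det_eq_of_map_ofPowerSeries_eq hH, det_mul, ← RingHom.mapMatrix_apply,
      ← RingHom.map_det, hS_det, map_intCast]
    exact ((Equiv.Perm.sign σ).isUnit.map (Int.castRingHom _)).mul hFhat
  · change _ * zpowDiagonal k * _ = _ * zpowDiagonal (k ∘ σ)
    rw [hH, Matrix.map_mul, mul_assoc _ (zpowDiagonal (-k)), zpowDiagonal_neg_mul, mul_one,
      mul_assoc _ (zpowDiagonal (-(k ∘ σ))), zpowDiagonal_neg_mul, mul_one, mul_assoc]
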